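/- Let n ≥ 2 and let P(x,y) = (1−|y|²)/(n ωₙ |x−y|ⁿ) be the Poisson kernel of the unit ball in ℝⁿ. Then for every s ∈ [0,1), sup over x ∈ ∂B₁(0) and y in the closed ball of radius s of |∇_y P(x,y)|/P(x,y) equals (n−1)/(1−s) + 1/(1+s), and this supremum is attained when y = s·x. -/

import Mathlib

/-!
Where `P(x, ·)` is positive it equals `c (1 - ‖y‖²) ‖x - y‖⁻ⁿ`, so `∇_y P = P w` with
`w = n (x - y) / ‖x - y‖² - 2 y / (1 - ‖y‖²)`. For `‖x‖ = 1`,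
`‖w‖² = n (n - 2) / ‖x - y‖² + 4 / (1 - ‖y‖²)² + 2 (n - 2) / (1 - ‖y‖²)`,
which for `n ≥ 2` grows as `‖x - y‖` shrinks and as `‖y‖` grows. On `‖y‖ ≤ s` both extremes
`‖x - y‖ = 1 - s` and `‖y‖ = s` are reached at `y = s x`, where
`w = ((n - 1) / (1 - s) + 1 / (1 + s)) x`.
-/

open MeasureTheory Metric Filter
open scoped Topology RealInnerProductSpace

noncomputable section

/-- `ωₙ`, the Lebesgue volume of the unit ball in `ℝⁿ`. -/
def omegaN (n : ℕ) : ℝ := (volume (ball (0 : EuclideanSpace ℝ (Fin n)) 1)).toReal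

/-- The Poisson kernel of the unit ball in `ℝⁿ`. -/
def poisson (n : ℕ) (x y : EuclideanSpace ℝ (Fin n)) : ℝ :=
  (1 - ‖y‖ ^ 2) / (n * omegaN n * ‖x - y‖ ^ n)

section Gradient

variable {E : Type*} [NormedAddCommGroup E] [InnerProductSpace ℝ E] [CompleteSpace E]
  {f g : E → ℝ} {f' g' x y : E}

theorem HasGradientAt.mul (hf : HasGradientAt f f' y) (hg : HasGradientAt g g' y) :
    HasGradientAt (fun z => f z * g z) (f y • g' + g y • f') y := by
  rw [hasGradientAt_iff_hasFDerivAt] at *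
  exact (hf.mul hg).congr_fderiv (by simp only [map_add, map_smul])

theorem HasGradientAt.const_mul (hf : HasGradientAt f f' y) (c : ℝ) :
    HasGradientAt (fun z => c * f z) (c • f') y := by
  rw [hasGradientAt_iff_hasFDerivAt] at *
  exact (hf.const_mul c).congr_fderiv (by simp only [map_smul])

theorem hasGradientAt_one_sub_norm_sq (y : E) :
    HasGradientAt (fun z => 1 - ‖z‖ ^ 2) (-(2 : ℝ) • y) y := by
  rw [hasGradientAt_iff_hasFDerivAt]
  refine ((hasStrictFDerivAt_norm_sq y).hasFDerivAt.const_sub 1).congr_fderiv ?_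
  ext v
  simp

theorem hasGradientAt_norm_sub_rpow (hxy : x ≠ y) (p : ℝ) :
    HasGradientAt (fun z => ‖x - z‖ ^ p) ((-p * ‖x - y‖ ^ (p - 2)) • (x - y)) y := by
  have hsq (z : E) (q : ℝ) : (‖x - z‖ ^ 2) ^ q = ‖x - z‖ ^ (2 * q) := by
    rw [← Real.rpow_natCast_mul (norm_nonneg _), Nat.cast_ofNat]
  have hd := (((hasFDerivAt_id y).const_sub x).norm_sq).rpow_const (p := p / 2)
    (Or.inl (by simpa [sub_eq_zero] using hxy))
  simp only [id_eq, hsq, mul_sub, mul_div_cancel₀ p two_ne_zero, mul_one] at hd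
  rw [hasGradientAt_iff_hasFDerivAt]
  refine hd.congr_fderiv ?_
  ext v
  simp only [smul_apply, neg_apply, ContinuousLinearMap.comp_neg, ContinuousLinearMap.comp_id,
    coe_innerSL_apply, InnerProductSpace.toDual_apply_apply, real_inner_smul_left, nsmul_eq_mul,
    smul_eq_mul]
  ring

end Gradient

section LogGradient

variable {E : Type*} [NormedAddCommGroup E] [InnerProductSpace ℝ E] {x y : E}

def poissonLogGrad (n : ℕ) (x y : E) : E :=
  ((n : ℝ) / ‖x - y‖ ^ 2) • (x - y) - (2 / (1 - ‖y‖ ^ 2)) • y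

theorem norm_poissonLogGrad_sq (n : ℕ) (hx : ‖x‖ = 1) (hy : ‖y‖ < 1) :
    ‖poissonLogGrad n x y‖ ^ 2 =
      n * (n - 2) / ‖x - y‖ ^ 2 + 4 / (1 - ‖y‖ ^ 2) ^ 2 + 2 * (n - 2) / (1 - ‖y‖ ^ 2) := by
  have hxy : ‖x - y‖ ≠ 0 := norm_sub_eq_zero_iff.not.2 (ne_of_apply_ne norm (by linarith))
  have hy2 : 1 - ‖y‖ ^ 2 ≠ 0 := by nlinarith [norm_nonneg y]
  have hinner : ⟪x - y, y⟫ = (1 - ‖y‖ ^ 2 - ‖x - y‖ ^ 2) / 2 := by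
    rw [norm_sub_sq_real, hx, inner_sub_left, real_inner_self_eq_norm_sq]; ring
  rw [poissonLogGrad, norm_sub_sq_real, norm_smul, norm_smul, real_inner_smul_left,
    real_inner_smul_right, hinner]
  simp only [Real.norm_eq_abs, mul_pow, sq_abs]
  field_simp
  ring

theorem norm_poissonLogGrad_le {n : ℕ} (hn : 2 ≤ n) {s : ℝ} (hx : ‖x‖ = 1) (hy : ‖y‖ ≤ s)
    (hs : s < 1) :
    ‖poissonLogGrad n x y‖ ≤ (n - 1) / (1 - s) + 1 / (1 + s) := by
  have hy1 : ‖y‖ < 1 := hy.trans_lt hs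
  have hs0 : 0 ≤ s := (norm_nonneg y).trans hy
  have hn₂ : (2 : ℝ) ≤ n := by exact_mod_cast hn
  have hxy : 1 - s ≤ ‖x - y‖ := by
    have := norm_sub_norm_le x y; rw [hx] at this; linarith
  have hys : 1 - s ^ 2 ≤ 1 - ‖y‖ ^ 2 := by nlinarith [norm_nonneg y]
  have hbound : ((n - 1) / (1 - s) + 1 / (1 + s)) ^ 2 =
      n * (n - 2) / (1 - s) ^ 2 + 4 / (1 - s ^ 2) ^ 2 + 2 * (n - 2) / (1 - s ^ 2) := by
    have : 1 - s ≠ 0 := by linarith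
    have : 1 + s ≠ 0 := by linarith
    have : 1 - s ^ 2 ≠ 0 := by nlinarith
    field_simp
    ring
  have hs1 : 0 < 1 - s := by linarith
  refine le_of_sq_le_sq ?_ (add_nonneg (div_nonneg (by linarith) hs1.le) (by positivity))
  rw [norm_poissonLogGrad_sq n hx hy1, hbound]
  have hs2 : 0 < 1 - s ^ 2 := by nlinarith
  have hn2 : (0 : ℝ) ≤ n - 2 := by linarith
  gcongr

theorem poissonLogGrad_smul_self (n : ℕ) (hx : ‖x‖ = 1) {s : ℝ} (hs₀ : -1 < s) (hs₁ : s < 1) :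
    poissonLogGrad n x (s • x) = ((n - 1) / (1 - s) + 1 / (1 + s)) • x := by
  have h1 : 1 - s ≠ 0 := by linarith
  have h2 : 1 + s ≠ 0 := by linarith
  have h3 : 1 - s ^ 2 ≠ 0 := by nlinarith
  have hxs : x - s • x = (1 - s) • x := by rw [sub_smul, one_smul]
  rw [poissonLogGrad, norm_smul, hx, hxs, norm_smul, hx, smul_smul, smul_smul,
    ← sub_smul, Real.norm_eq_abs, Real.norm_eq_abs, abs_of_pos (by linarith : 0 < 1 - s)]
  congr 1
  simp only [mul_one, sq_abs]
  field_simp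
  ring

end LogGradient

lemma omegaN_pos (n : ℕ) : 0 < omegaN n :=
  ENNReal.toReal_pos (measure_ball_pos _ _ one_pos).ne' measure_ball_lt_top.ne

-- At `z = x` both sides are `0`, by the conventions `a / 0 = 0` and `0⁻¹ = 0`.
lemma poisson_eq_mul_rpow (n : ℕ) (x z : EuclideanSpace ℝ (Fin n)) :
    poisson n x z = (n * omegaN n)⁻¹ * ((1 - ‖z‖ ^ 2) * ‖x - z‖ ^ (-(n : ℝ))) := by
  rw [poisson, Real.rpow_neg (norm_nonneg _), Real.rpow_natCast, mul_inv]
  ring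

section Poisson

variable {n : ℕ} {x y : EuclideanSpace ℝ (Fin n)}

lemma poisson_pos (hn : n ≠ 0) (hx : ‖x‖ = 1) (hy : ‖y‖ < 1) : 0 < poisson n x y := by
  have hm : 0 < ‖x - y‖ := norm_pos_iff.2 (sub_ne_zero.2 (ne_of_apply_ne norm (by linarith)))
  have hω := omegaN_pos n
  have hy2 : 0 < 1 - ‖y‖ ^ 2 := by nlinarith [norm_nonneg y]
  unfold poisson
  positivity

theorem hasGradientAt_poisson (hx : ‖x‖ = 1) (hy : ‖y‖ < 1) :
    HasGradientAt (poisson n x) (poisson n x y • poissonLogGrad n x y) y := by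
  have hxy : x ≠ y := ne_of_apply_ne norm (by linarith)
  have hd := ((hasGradientAt_one_sub_norm_sq y).mul
    (hasGradientAt_norm_sub_rpow hxy (-n))).const_mul (n * omegaN n)⁻¹
  have hm : 0 < ‖x - y‖ := norm_pos_iff.2 (sub_ne_zero.2 hxy)
  have hy2 : 1 - ‖y‖ ^ 2 ≠ 0 := by nlinarith [norm_nonneg y]
  rw [poisson_eq_mul_rpow, show poisson n x = _ from funext (poisson_eq_mul_rpow n x)]
  convert hd using 1
  rw [poissonLogGrad, Real.rpow_sub hm, Real.rpow_two]
  match_scalars <;> field_simp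
  ring

theorem norm_gradient_poisson_div_poisson (hn : n ≠ 0) (hx : ‖x‖ = 1) (hy : ‖y‖ < 1) :
    ‖gradient (poisson n x) y‖ / poisson n x y = ‖poissonLogGrad n x y‖ := by
  have hP := poisson_pos hn hx hy
  rw [(hasGradientAt_poisson hx hy).gradient, norm_smul, Real.norm_of_nonneg hP.le,
    mul_div_cancel_left₀ _ hP.ne']

end Poisson

/-- The supremum over `x ∈ ∂B₁(0)` and `y ∈ B̄ₛ(0)` of the logarithmic gradient of the Poisson
kernel equals `(n−1)/(1−s) + 1/(1+s)`, attained at `y = s • x`. -/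
theorem stmt3 {n : ℕ} (hn : 2 ≤ n) (s : ℝ) (hs0 : 0 ≤ s) (hs1 : s < 1) :
    (∀ x ∈ sphere (0 : EuclideanSpace ℝ (Fin n)) 1,
      ∀ y ∈ closedBall (0 : EuclideanSpace ℝ (Fin n)) s,
        ‖gradient (fun z => poisson n x z) y‖ / poisson n x y ≤
          ((n : ℝ) - 1) / (1 - s) + 1 / (1 + s)) ∧
    (∀ x ∈ sphere (0 : EuclideanSpace ℝ (Fin n)) 1,
      ‖gradient (fun z => poisson n x z) (s • x)‖ / poisson n x (s • x) =
        ((n : ℝ) - 1) / (1 - s) + 1 / (1 + s)) := by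
  have hn0 : n ≠ 0 := by omega
  refine ⟨fun x hx y hy => ?_, fun x hx => ?_⟩
  · rw [mem_sphere_zero_iff_norm] at hx
    rw [mem_closedBall_zero_iff] at hy
    rw [norm_gradient_poisson_div_poisson hn0 hx (hy.trans_lt hs1)]
    exact norm_poissonLogGrad_le hn hx hy hs1
  · rw [mem_sphere_zero_iff_norm] at hx
    have hsx : ‖s • x‖ < 1 := by rwa [norm_smul, hx, mul_one, Real.norm_of_nonneg hs0]
    have hn1 : (1 : ℝ) ≤ n := by exact_mod_cast hn.trans' one_le_two
    rw [norm_gradient_poisson_div_poisson hn0 hx hsx,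
      poissonLogGrad_smul_self n hx (by linarith) hs1, norm_smul, hx, mul_one,
      Real.norm_of_nonneg (add_nonneg (div_nonneg (by linarith) (by linarith)) (by positivity))]

end
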